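/- Let (R,m) be a local ring of depth zero and M a finitely generated R-module. For n > 0, if a ∈ R annihilates stableHom_R(R/m^n, R/m^n), then a ∈ (0 :_R m^n) + m^n. -/

import Mathlib

open CategoryTheory IsLocalRing

universe u

variable (R : Type u) [CommRing R]

/-- The submodule of `Hom_R(M,N)` consisting of maps factoring through a projective module. -/
def projStable (M N : Type u) [AddCommGroup M] [Module R M] [AddCommGroup N] [Module R N] :
    Submodule R (M →ₗ[R] N) where
  carrier := {f | ∃ (P : Type u) (_ : AddCommGroup P) (_ : Module R P)
    (_ : Module.Projective R P) (g : M →ₗ[R] P) (h : P →ₗ[R] N), f = h.comp g}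
  zero_mem' := ⟨PUnit, inferInstance, inferInstance, inferInstance, 0, 0, by ext x; simp⟩
  add_mem' := by
    rintro f f' ⟨P, _, _, _, g, h, rfl⟩ ⟨P', _, _, _, g', h', rfl⟩
    exact ⟨P × P', inferInstance, inferInstance, inferInstance, g.prod g',
      h.comp (LinearMap.fst R P P') + h'.comp (LinearMap.snd R P P'), by ext x; simp⟩
  smul_mem' := by
    rintro r f ⟨P, _, _, _, g, h, rfl⟩
    exact ⟨P, inferInstance, inferInstance, inferInstance, g, r • h, by ext x; simp⟩

/-- The stable hom module `Hom_R(M,N)/P_R(M,N)`. -/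
def stableHom (M N : Type u) [AddCommGroup M] [Module R M] [AddCommGroup N] [Module R N] :=
  (M →ₗ[R] N) ⧸ projStable R M N

noncomputable instance (M N : Type u) [AddCommGroup M] [Module R M] [AddCommGroup N]
    [Module R N] : AddCommGroup (stableHom R M N) :=
  inferInstanceAs (AddCommGroup ((M →ₗ[R] N) ⧸ projStable R M N))

noncomputable instance (M N : Type u) [AddCommGroup M] [Module R M] [AddCommGroup N]
    [Module R N] : Module R (stableHom R M N) :=
  inferInstanceAs (Module R ((M →ₗ[R] N) ⧸ projStable R M N))

/-- `Ann(M)`: the annihilator of the stable endomorphism module of `M`. -/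
noncomputable def stAnn (M : Type u) [AddCommGroup M] [Module R M] : Ideal R :=
  Module.annihilator R (stableHom R M M)

/-- `Ext_R^n(M,N)` as an `R`-module. -/
noncomputable abbrev ExtM (n : ℕ) (M : ModuleCat.{u} R) (N : ModuleCat.{u} R) :
    ModuleCat.{u} R :=
  ((Ext R (ModuleCat.{u} R) n).obj (Opposite.op M)).obj N

/-- `ca^n(R)`, the `n`-th cohomology annihilator ideal. -/
noncomputable def ca (n : ℕ) : Ideal R :=
  ⨅ (m : ℕ) (_ : n ≤ m) (M : ModuleCat.{u} R) (N : ModuleCat.{u} R)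
    (_ : Module.Finite R M) (_ : Module.Finite R N),
    Module.annihilator R (ExtM R m M N)

/-!
Multiplication by `a` on `R/I` factors through a projective module `P`. Lifting the map
`P → R/I` along `R → R/I` gives a map `R/I → R` sending `1` to some `t` with `t ≡ a mod I`,
and every element in the image of a map `R/I → R` is killed by `I`.
-/

section

variable {R : Type u} [CommRing R]

theorem smul_id_mem_projStable_of_mem_stAnn {M : Type u} [AddCommGroup M] [Module R M] {a : R}
    (ha : a ∈ stAnn R M) : a • LinearMap.id ∈ projStable R M M := by
  rw [← Submodule.Quotient.mk_eq_zero, Submodule.Quotient.mk_smul]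
  exact Module.mem_annihilator.mp ha _

theorem Ideal.apply_mem_colon_bot (I : Ideal R) (f : R ⧸ I →ₗ[R] R) (x : R ⧸ I) :
    f x ∈ (⊥ : Ideal R).colon (I : Set R) := by
  refine Submodule.mem_colon.mpr fun c hc => ?_
  obtain ⟨y, rfl⟩ := Ideal.Quotient.mk_surjective x
  have hcy : c • Ideal.Quotient.mk I y = 0 :=
    Ideal.Quotient.eq_zero_iff_mem.mpr (I.mul_mem_right y hc)
  rw [Submodule.mem_bot, smul_eq_mul, mul_comm, ← smul_eq_mul, ← map_smul, hcy, map_zero]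

theorem mem_colon_bot_sup_of_mem_stAnn (I : Ideal R) {a : R} (ha : a ∈ stAnn R (R ⧸ I)) :
    a ∈ (⊥ : Ideal R).colon (I : Set R) + I := by
  obtain ⟨P, _, _, _, g, h, hfact⟩ := smul_id_mem_projStable_of_mem_stAnn ha
  obtain ⟨h', hh'⟩ := Module.projective_lifting_property (Ideal.Quotient.mkₐ R I).toLinearMap h
    Ideal.Quotient.mk_surjective
  have hlift : Ideal.Quotient.mk I (h' (g 1)) = Ideal.Quotient.mk I a := by
    have := LinearMap.congr_fun hfact 1
    rw [LinearMap.comp_apply, ← hh'] at this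
    simpa [Algebra.smul_def] using this.symm
  rw [show a = h' (g 1) + (a - h' (g 1)) by ring]
  exact Submodule.add_mem_sup (I.apply_mem_colon_bot (h' ∘ₗ g) 1)
    (Ideal.Quotient.eq.mp hlift.symm)

end

theorem stmt12 [IsLocalRing R] (n : ℕ) (a : R)
    (ha : a ∈ stAnn R (R ⧸ ((maximalIdeal R) ^ n : Ideal R))) :
    a ∈ (⊥ : Ideal R).colon (((maximalIdeal R) ^ n : Ideal R) : Set R) + (maximalIdeal R) ^ n :=
  mem_colon_bot_sup_of_mem_stAnn _ ha
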